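/- Fix x > 0 and define p(t,y) := (e^{−t/2}/√(2πt)) · (sinh(y)/sinh(x)) · ( e^{−(x−y)²/(2t)} − e^{−(x+y)²/(2t)} ) for t > 0 and y > 0. Then p satisfies the forward Kolmogorov (Fokker–Planck) equation of the hyperbolic Bessel process of order 3: for all t > 0 and y > 0, ∂_t p(t,y) = (1/2) ∂_y² p(t,y) − ∂_y ( coth(y) · p(t,y) ), where coth(y) = cosh(y)/sinh(y). -/

import Mathlib

/-!
The process is Doob's `h`-transform, with `h = sinh`, of Brownian motion on `(0, ∞)` killed at `0`
and at rate `1/2`: indeed `½ sinh'' - ½ sinh = 0`. Accordingly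
`p(t, y) = e^{-t/2} (sinh y / sinh x) q(t, y)`, where `q` is the heat kernel with an odd image
at `-x`, and the product rule turns `∂ₜ q = ½ ∂²q` into the forward equation with drift
`h'/h = coth`.
-/

open Real

noncomputable def heatKernel (t a : ℝ) : ℝ :=
  exp (-a ^ 2 / (2 * t)) / √(2 * π * t)

theorem hasDerivAt_heatKernel (t a : ℝ) :
    HasDerivAt (heatKernel t) (-(a / t) * heatKernel t a) a := by
  refine (((((hasDerivAt_id a).pow 2).neg.div_const (2 * t)).exp).div_const
    (√(2 * π * t))).congr_deriv ?_
  simp only [heatKernel, id, Pi.pow_apply, Pi.neg_apply]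
  rcases eq_or_ne t 0 with rfl | ht
  · simp -- both sides vanish by division by zero
  · field_simp
    ring

theorem hasDerivAt_neg_div_mul_heatKernel (t a : ℝ) :
    HasDerivAt (fun b => -(b / t) * heatKernel t b)
      ((a ^ 2 / t ^ 2 - 1 / t) * heatKernel t a) a := by
  refine (((hasDerivAt_id a).div_const t).neg.mul (hasDerivAt_heatKernel t a)).congr_deriv ?_
  simp only [id, Pi.neg_apply]
  ring

theorem hasDerivAt_heatKernel_time {t : ℝ} (ht : 0 < t) (a : ℝ) :
    HasDerivAt (fun s => heatKernel s a) ((a ^ 2 / t ^ 2 - 1 / t) / 2 * heatKernel t a) t := by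
  have hpos : 0 < 2 * π * t := by positivity
  have hexp := ((hasDerivAt_const t (-a ^ 2)).div
    ((hasDerivAt_id t).const_mul 2) (by simp [ht.ne'])).exp
  have hsqrt := ((hasDerivAt_id t).const_mul (2 * π)).sqrt hpos.ne'
  refine (hexp.div hsqrt (sqrt_pos.2 hpos).ne').congr_deriv ?_
  simp only [heatKernel, id, Pi.div_apply]
  field_simp
  rw [sq_sqrt (by positivity)]
  ring

theorem fokkerPlanck_of_hTransform {p q : ℝ → ℝ → ℝ} {h h' q' : ℝ → ℝ}
    {κ c t y qₜ q'' : ℝ}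
    (hp : ∀ s z, p s z = c * exp (-κ * s / 2) * h z * q s z)
    (hh : ∀ z, HasDerivAt h (h' z) z) (hh' : HasDerivAt h' (κ * h y) y) (hy : h y ≠ 0)
    (hqₜ : HasDerivAt (fun s => q s y) qₜ t) (hq : ∀ z, HasDerivAt (q t) (q' z) z)
    (hq' : HasDerivAt q' q'' y) (heat : qₜ = q'' / 2) :
    deriv (fun s => p s y) t =
      1 / 2 * deriv (deriv (p t)) y - deriv (fun z => h' z / h z * p t z) y := by
  set e := exp (-κ * t / 2)
  have hpt : ∀ z, p t z = c * e * h z * q t z := hp t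
  have hpₜ : HasDerivAt (fun s => p s y) (c * h y * (e * (-κ / 2) * q t y + e * qₜ)) t := by
    simp only [hp]
    refine ((((((hasDerivAt_id t).const_mul (-κ)).div_const 2).exp.const_mul c).mul_const
      (h y)).mul hqₜ).congr_deriv ?_
    simp only [id, e]
    ring
  have hp' : deriv (p t) = fun z => c * e * (h' z * q t z + h z * q' z) := by
    funext z
    rw [funext hpt]
    refine ((((hh z).const_mul (c * e)).mul (hq z)).congr_deriv ?_).deriv
    ring
  have hp'' : HasDerivAt (fun z => c * e * (h' z * q t z + h z * q' z))
      (c * e * (κ * h y * q t y + 2 * h' y * q' y + h y * q'')) y :=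
    (((hh'.mul (hq y)).add ((hh y).mul hq')).const_mul (c * e)).congr_deriv (by ring)
  have hdrift_eq : (fun z => h' z / h z * p t z) =ᶠ[nhds y] fun z => c * e * (h' z * q t z) := by
    filter_upwards [(hh y).continuousAt.eventually_ne hy] with z hz
    rw [hpt]
    field_simp
  have hdrift : HasDerivAt (fun z => c * e * (h' z * q t z))
      (c * e * (κ * h y * q t y + h' y * q' y)) y :=
    (hh'.mul (hq y)).const_mul (c * e)
  rw [hpₜ.deriv, hp', hp''.deriv, hdrift_eq.deriv_eq, hdrift.deriv]
  -- the `h' q'` terms cancel, and `h'' = κ h` matches the decay rate of `exp (-κ t / 2)`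
  linear_combination c * e * h y * heat

theorem hyperbolic_bessel3_forward_kolmogorov_general (x : ℝ) (p : ℝ → ℝ → ℝ)
    (hp : ∀ t y : ℝ, p t y =
      (Real.exp (-t / 2) / Real.sqrt (2 * Real.pi * t)) * (Real.sinh y / Real.sinh x) *
        (Real.exp (-(x - y) ^ 2 / (2 * t)) - Real.exp (-(x + y) ^ 2 / (2 * t)))) :
    ∀ t y : ℝ, 0 < t → 0 < y →
      deriv (fun s => p s y) t =
        (1 / 2) * deriv (fun z => deriv (fun w => p t w) z) y -
          deriv (fun z => (Real.cosh z / Real.sinh z) * p t z) y := by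
  intro t y ht hy
  have hp_sinh : ∀ s z, p s z = (sinh x)⁻¹ * exp (-1 * s / 2) * sinh z *
      (heatKernel s (z - x) - heatKernel s (z + x)) := by
    intro s z
    rw [hp, heatKernel, heatKernel, show (x - z) ^ 2 = (z - x) ^ 2 by ring, add_comm x z,
      neg_one_mul]
    ring
  exact fokkerPlanck_of_hTransform hp_sinh hasDerivAt_sinh (by simpa using hasDerivAt_cosh y)
    (sinh_pos_iff.2 hy).ne'
    ((hasDerivAt_heatKernel_time ht (y - x)).sub (hasDerivAt_heatKernel_time ht (y + x)))
    (fun z => ((hasDerivAt_heatKernel t (z - x)).comp_sub_const z x).sub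
      ((hasDerivAt_heatKernel t (z + x)).comp_add_const z x))
    (((hasDerivAt_neg_div_mul_heatKernel t (y - x)).comp_sub_const y x).sub
      ((hasDerivAt_neg_div_mul_heatKernel t (y + x)).comp_add_const y x))
    (by ring)

/-- For fixed `x > 0`, the transition density
`p(t,y) = (e^{-t/2}/√(2πt)) (sinh y / sinh x)(e^{-(x-y)²/(2t)} - e^{-(x+y)²/(2t)})`
of the hyperbolic Bessel process of order `3` satisfies the forward Kolmogorov
(Fokker–Planck) equation `∂_t p = (1/2) ∂_y² p - ∂_y (coth y · p)` for all
`t > 0`, `y > 0`. -/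
theorem hyperbolic_bessel3_forward_kolmogorov (x : ℝ) (hx : 0 < x) (p : ℝ → ℝ → ℝ)
    (hp : ∀ t y : ℝ, p t y =
      (Real.exp (-t / 2) / Real.sqrt (2 * Real.pi * t)) * (Real.sinh y / Real.sinh x) *
        (Real.exp (-(x - y) ^ 2 / (2 * t)) - Real.exp (-(x + y) ^ 2 / (2 * t)))) :
    ∀ t y : ℝ, 0 < t → 0 < y →
      deriv (fun s => p s y) t =
        (1 / 2) * deriv (fun z => deriv (fun w => p t w) z) y -
          deriv (fun z => (Real.cosh z / Real.sinh z) * p t z) y :=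
  hyperbolic_bessel3_forward_kolmogorov_general x p hp
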